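/- For every solution X of the truncated tree model on [0,T], the kinetic energy E(t) = ∑_{j ∈ J} X_j(t)² is constant in time: E(t) = E(0) for all t ∈ [0,T]. -/

import Mathlib

/-- The offspring set `O_j = {k ≠ root : parent k = j}` of a node in a finite eddy tree. -/
def offspring {J : Type*} [Fintype J] [DecidableEq J] (root : J) (parent : J → J)
    (j : J) : Finset J :=
  Finset.univ.filter fun k => k ≠ root ∧ parent k = j

/-- A solution of the truncated tree model on `[0,T]`:
`X_j' = α (c_j X_{\bar j}² − ∑_{k ∈ O_j} c_k X_j X_k)
      − β (d_{\bar j} X_{\bar j} X_j − ∑_{k ∈ O_j} d_j X_k²)`. -/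
def IsTreeSolution {J : Type*} [Fintype J] [DecidableEq J] (root : J) (parent : J → J)
    (α β : ℝ) (c d : J → ℝ) (T : ℝ) (X : ℝ → J → ℝ) : Prop :=
  ∀ j : J, ∀ t ∈ Set.Icc (0 : ℝ) T,
    HasDerivWithinAt (fun u => X u j)
      (α * (c j * (X t (parent j)) ^ 2
          - ∑ k ∈ offspring root parent j, c k * X t j * X t k)
        - β * (d (parent j) * X t (parent j) * X t j
          - ∑ k ∈ offspring root parent j, d j * (X t k) ^ 2))
      (Set.Icc (0 : ℝ) T) t

/-! The energy equation `E' = 2 ∑ⱼ Xⱼ Xⱼ'` splits into contributions of the edges `(k̄, k)`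
of the tree: node `k` gains `α cₖ X_{k̄}² Xₖ − β d_{k̄} X_{k̄} Xₖ²` through the terms of `Xₖ'`
involving its parent, and its parent `k̄` loses exactly that amount through its offspring sums.
Summing over all nodes, these fluxes cancel in pairs; the root term vanishes since
`c_o = d_o = 0` and `ō = o`. So `E' = 0` on `[0,T]` and `E` is constant. -/

open Finset

theorem constant_of_hasDerivWithinAt_Icc_zero {E : Type*} [NormedAddCommGroup E]
    [NormedSpace ℝ E] {f : ℝ → E} {a b : ℝ}
    (hf : ∀ x ∈ Set.Icc a b, HasDerivWithinAt f 0 (Set.Icc a b) x) :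
    ∀ x ∈ Set.Icc a b, f x = f a :=
  constant_of_has_deriv_right_zero (fun x hx => (hf x hx).continuousWithinAt) fun x hx =>
    (hf x (Set.Ico_subset_Icc_self hx)).mono_of_mem_nhdsWithin (Icc_mem_nhdsGE_of_mem hx)

namespace TreeModel

variable {J : Type*} [Fintype J] [DecidableEq J] (root : J) (parent : J → J)

theorem mem_offspring {j k : J} : k ∈ offspring root parent j ↔ k ≠ root ∧ parent k = j := by
  simp [offspring]

theorem sum_sum_offspring {M : Type*} [AddCommMonoid M] (f : J → M) :
    ∑ j, ∑ k ∈ offspring root parent j, f k = ∑ k ∈ univ.erase root, f k := by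
  have hfiber : ∀ j, offspring root parent j = (univ.erase root).filter (parent · = j) := by
    intro j
    ext k
    simp [mem_offspring]
  simp only [hfiber]
  exact sum_fiberwise_of_maps_to (fun k _ => mem_univ (parent k)) f

variable (α β : ℝ) (c d : J → ℝ)

def field (x : J → ℝ) (j : J) : ℝ :=
  α * (c j * x (parent j) ^ 2 - ∑ k ∈ offspring root parent j, c k * x j * x k)
    - β * (d (parent j) * x (parent j) * x j - ∑ k ∈ offspring root parent j, d j * x k ^ 2)

def edgeFlux (x : J → ℝ) (k : J) : ℝ :=
  α * c k * x (parent k) ^ 2 * x k - β * d (parent k) * x (parent k) * x k ^ 2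

theorem mul_field_eq (x : J → ℝ) (j : J) :
    x j * field root parent α β c d x j =
      edgeFlux parent α β c d x j - ∑ k ∈ offspring root parent j, edgeFlux parent α β c d x k := by
  have hchildren : ∑ k ∈ offspring root parent j, edgeFlux parent α β c d x k =
      ∑ k ∈ offspring root parent j, (α * c k * x j ^ 2 * x k - β * d j * x j * x k ^ 2) :=
    sum_congr rfl fun k hk => by rw [edgeFlux, ((mem_offspring root parent).1 hk).2]
  have hc : ∑ k ∈ offspring root parent j, α * c k * x j ^ 2 * x k =
      x j * α * ∑ k ∈ offspring root parent j, c k * x j * x k := by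
    rw [mul_sum]
    exact sum_congr rfl fun k _ => by ring
  have hd : ∑ k ∈ offspring root parent j, β * d j * x j * x k ^ 2 =
      x j * β * ∑ k ∈ offspring root parent j, d j * x k ^ 2 := by
    rw [mul_sum]
    exact sum_congr rfl fun k _ => by ring
  rw [hchildren, sum_sub_distrib, hc, hd, field, edgeFlux]
  ring

theorem sum_mul_field_eq_zero (hparent_root : parent root = root)
    (hc_root : c root = 0) (hd_root : d root = 0) (x : J → ℝ) :
    ∑ j, x j * field root parent α β c d x j = 0 := by
  have hroot : edgeFlux parent α β c d x root = 0 := by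
    simp [edgeFlux, hparent_root, hc_root, hd_root]
  rw [sum_congr rfl fun j _ => mul_field_eq root parent α β c d x j, sum_sub_distrib,
    sum_sum_offspring, ← add_sum_erase univ _ (mem_univ root), hroot, zero_add, sub_self]

theorem hasDerivWithinAt_energy {T t : ℝ} {X : ℝ → J → ℝ}
    (hX : IsTreeSolution root parent α β c d T X) (ht : t ∈ Set.Icc (0 : ℝ) T) :
    HasDerivWithinAt (fun u => ∑ j, X u j ^ 2)
      (2 * ∑ j, X t j * field root parent α β c d (X t) j) (Set.Icc (0 : ℝ) T) t := by
  refine (HasDerivWithinAt.fun_sum fun j (_ : j ∈ univ) => (hX j t ht).fun_pow 2).congr_deriv ?_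
  rw [mul_sum]
  exact sum_congr rfl fun j _ => by rw [field]; ring

end TreeModel

open TreeModel in
theorem tree_energy_conservation_general {J : Type*} [Fintype J] [DecidableEq J]
    (root : J) (parent : J → J)
    (hparent_root : parent root = root)
    (α β : ℝ) (c d : J → ℝ)
    (hc_root : c root = 0) (hd_root : d root = 0)
    (T : ℝ) (X : ℝ → J → ℝ)
    (hX : IsTreeSolution root parent α β c d T X) :
    ∀ t ∈ Set.Icc (0 : ℝ) T, ∑ j : J, (X t j) ^ 2 = ∑ j : J, (X 0 j) ^ 2 := by
  refine constant_of_hasDerivWithinAt_Icc_zero fun t ht => ?_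
  simpa only [sum_mul_field_eq_zero root parent α β c d hparent_root hc_root hd_root, mul_zero]
    using hasDerivWithinAt_energy root parent α β c d hX ht

/-- for every solution of the truncated tree model on `[0,T]`, the kinetic
energy `E(t) = ∑_{j ∈ J} X_j(t)²` is constant in time. -/
theorem tree_energy_conservation {J : Type*} [Fintype J] [DecidableEq J]
    (root : J) (parent : J → J) (gen : J → ℕ)
    (hparent_root : parent root = root) (hgen_root : gen root = 0)
    (hgen : ∀ j, j ≠ root → gen j = gen (parent j) + 1)
    (α β : ℝ) (c d : J → ℝ)
    (hc_root : c root = 0) (hd_root : d root = 0)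
    (hconserv : ∀ j, j ≠ root → α * c j - β * d j = 0)
    (T : ℝ) (hT : 0 < T) (X : ℝ → J → ℝ)
    (hX : IsTreeSolution root parent α β c d T X) :
    ∀ t ∈ Set.Icc (0 : ℝ) T, ∑ j : J, (X t j) ^ 2 = ∑ j : J, (X 0 j) ^ 2 :=
  tree_energy_conservation_general root parent hparent_root α β c d hc_root hd_root T X hX
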